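/- Let z ∈ ℝ², ς̄ > ς > 0, ε₁, ε₂ > 0, θ ∈ [-1,1], and let ε* be the constant satisfying ε* = e^{-(ε*+1)}. Then z₁·(-θς - ς̄·tanh(ς̄z₁/ε₁)) + z₂·(-θς - ς̄·tanh(ς̄z₂/ε₂)) ≤ ε*·(ε₁ + ε₂). -/

import Mathlib

/-!
Since `1 - tanh t = 2 / (exp (2t) + 1)`, the compensation gap `|x| - x tanh (x / ε)` equals
`ε · 2t / (exp (2t) + 1)` with `t = |x| / ε`, and `s / (exp s + 1)` is maximal exactly at the
fixed point `ε* = exp (-(ε* + 1))`, where its value is `ε*`. As `|θ ς| ≤ ς̄`, the perturbation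
`-z θ ς` is at most `|ς̄ z|`, so each coordinate contributes at most `ε* εⱼ`.
-/

open Real

lemma le_mul_exp_add_one_of_eq_exp_neg {c : ℝ} (hc : c = exp (-(c + 1))) (s : ℝ) :
    s ≤ c * (exp s + 1) := by
  have hexp : exp (s - (c + 1)) = c * exp s := by
    rw [sub_eq_neg_add, exp_add, ← hc, mul_comm]
  linarith [add_one_le_exp (s - (c + 1))]

lemma Real.one_sub_tanh (t : ℝ) : 1 - tanh t = 2 / (exp (2 * t) + 1) := by
  have h2t : exp (2 * t) = exp t * exp t := by rw [two_mul, exp_add]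
  rw [tanh_eq, exp_neg, h2t]
  have := exp_pos t
  field_simp
  ring

lemma mul_one_sub_tanh_le {c : ℝ} (hc : c = exp (-(c + 1))) (t : ℝ) :
    t * (1 - tanh t) ≤ c := by
  rw [one_sub_tanh, mul_div_assoc', div_le_iff₀ (by positivity), mul_comm t]
  exact le_mul_exp_add_one_of_eq_exp_neg hc (2 * t)

lemma mul_tanh_div_eq_abs (x ε : ℝ) : x * tanh (x / ε) = |x| * tanh (|x| / ε) := by
  rcases abs_cases x with ⟨h, -⟩ | ⟨h, -⟩ <;> rw [h]
  rw [neg_div, tanh_neg, neg_mul_neg]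

lemma abs_sub_mul_tanh_div_le {c ε : ℝ} (hc : c = exp (-(c + 1))) (hε : 0 < ε) (x : ℝ) :
    |x| - x * tanh (x / ε) ≤ c * ε := by
  rw [mul_tanh_div_eq_abs]
  calc |x| - |x| * tanh (|x| / ε) = ε * (|x| / ε * (1 - tanh (|x| / ε))) := by field_simp
    _ ≤ ε * c := mul_le_mul_of_nonneg_left (mul_one_sub_tanh_le hc _) hε.le
    _ = c * ε := mul_comm ε c

lemma mul_neg_sub_mul_tanh_le {c ε a b : ℝ} (hc : c = exp (-(c + 1))) (hε : 0 < ε)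
    (ha : |a| ≤ b) (z : ℝ) : z * (-a - b * tanh (b * z / ε)) ≤ c * ε := by
  have hb : 0 ≤ b := (abs_nonneg a).trans ha
  have hperturb : -(z * a) ≤ |b * z| :=
    calc -(z * a) ≤ |z| * |a| := (neg_le_abs _).trans (abs_mul z a).le
      _ ≤ |z| * b := mul_le_mul_of_nonneg_left ha (abs_nonneg z)
      _ = |b * z| := by rw [abs_mul, abs_of_nonneg hb, mul_comm]
  have hcompensation := abs_sub_mul_tanh_div_le hc hε (b * z)
  linarith

theorem stmt_13 (z₁ z₂ ς ςbar ε₁ ε₂ θ εs : ℝ)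
    (hς : 0 < ς) (hςbar : ς < ςbar) (hε₁ : 0 < ε₁) (hε₂ : 0 < ε₂)
    (hθ : θ ∈ Set.Icc (-1 : ℝ) 1)
    (hεs : εs = Real.exp (-(εs + 1))) :
    z₁ * (-(θ * ς) - ςbar * Real.tanh (ςbar * z₁ / ε₁)) +
      z₂ * (-(θ * ς) - ςbar * Real.tanh (ςbar * z₂ / ε₂)) ≤ εs * (ε₁ + ε₂) := by
  have hθς : |θ * ς| ≤ ςbar := by
    rw [abs_mul, abs_of_pos hς]
    exact (mul_le_of_le_one_left hς.le (abs_le.mpr hθ)).trans hςbar.le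
  have h₁ := mul_neg_sub_mul_tanh_le hεs hε₁ hθς z₁
  have h₂ := mul_neg_sub_mul_tanh_le hεs hε₂ hθς z₂
  linarith
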